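/- arXiv:2404.19183 — 7 statements merged into one kernel-verified Lean document; each statement's English description precedes it below -/
import Mathlib

section
/- Let V be a finite-dimensional vector space over a field, W a finite increasing filtration on V, and N : V → V a nilpotent linear map with N(W_w) ⊆ W_w for all w. If a finite increasing filtration 𝒲 on V satisfies (i) N(𝒲_w) ⊆ 𝒲_{w−2} for all w, and (ii) for every w and every r ≥ 0 the induced map N^r : gr^𝒲_{w+r} gr^W_w → gr^𝒲_{w−r} gr^W_w is an isomorphism, then 𝒲 is unique: any two filtrations satisfying (i) and (ii) coincide. -/
/-- A finite increasing filtration on a vector space. -/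
def IsFiniteFiltration {K V : Type*} [Field K] [AddCommGroup V] [Module K V]
    (W : ℤ → Submodule K V) : Prop :=
  Monotone W ∧ (∃ a : ℤ, ∀ w : ℤ, w ≤ a → W w = ⊥) ∧ (∃ b : ℤ, ∀ w : ℤ, b ≤ w → W w = ⊤)

/-- `𝒲` is a relative monodromy filtration of `N` with respect to `W`:
(i) `N 𝒲_w ⊆ 𝒲_{w-2}`; (ii) for all `w` and `r ≥ 0`, the induced map
`N^r : gr^𝒲_{w+r} gr^W_w → gr^𝒲_{w-r} gr^W_w` is an isomorphism, expressed elementwise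
on the subquotients `((𝒲_m ⊓ W_w) + W_{w-1}) / W_{w-1}`. -/
def IsRelMonodromy {K V : Type*} [Field K] [AddCommGroup V] [Module K V]
    (N : Module.End K V) (W 𝒲 : ℤ → Submodule K V) : Prop :=
  IsFiniteFiltration 𝒲 ∧
  (∀ w : ℤ, ∀ x ∈ 𝒲 w, N x ∈ 𝒲 (w - 2)) ∧
  (∀ w : ℤ, ∀ r : ℕ,
    (∀ x ∈ 𝒲 (w + r) ⊓ W w,
       (N ^ r) x ∈ (𝒲 (w - r - 1) ⊓ W w) ⊔ W (w - 1) →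
       x ∈ (𝒲 (w + r - 1) ⊓ W w) ⊔ W (w - 1)) ∧
    (∀ y ∈ 𝒲 (w - r) ⊓ W w, ∃ x ∈ 𝒲 (w + r) ⊓ W w,
       y - (N ^ r) x ∈ (𝒲 (w - r - 1) ⊓ W w) ⊔ W (w - 1)))

section RMFAux

variable {K V : Type*} [Field K] [AddCommGroup V] [Module K V]

private lemma rmf_memc {M : ℤ → Submodule K V} {i i' : ℤ} (h : i = i') {x : V}
    (hx : x ∈ M i) : x ∈ M i' := h ▸ hx

private lemma rmf_powShift {N : Module.End K V} {M : ℤ → Submodule K V}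
    (hM1 : ∀ w : ℤ, ∀ x ∈ M w, N x ∈ M (w - 2)) :
    ∀ (s : ℕ) (w : ℤ), ∀ x ∈ M w, (N ^ s) x ∈ M (w - 2 * s) := by
  intro s
  induction s with
  | zero => intro w x hx; simpa using hx
  | succ n ih =>
    intro w x hx
    have h2 : N ((N ^ n) x) ∈ M (w - 2 * n - 2) := hM1 _ _ (ih w x hx)
    have h3 : (N ^ (n + 1)) x = N ((N ^ n) x) := by rw [pow_succ']; rfl
    rw [h3]
    exact rmf_memc (by push_cast; ring) h2

private lemma rmf_powW {N : Module.End K V} {W : ℤ → Submodule K V}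
    (hNW : ∀ w : ℤ, ∀ x ∈ W w, N x ∈ W w) :
    ∀ (s : ℕ) (w : ℤ), ∀ x ∈ W w, (N ^ s) x ∈ W w := by
  intro s
  induction s with
  | zero => intro w x hx; simpa using hx
  | succ n ih =>
    intro w x hx
    have h3 : (N ^ (n + 1)) x = N ((N ^ n) x) := by rw [pow_succ']; rfl
    rw [h3]
    exact hNW _ _ (ih w x hx)

/-- Global injectivity lemma: if `x ∈ M m ∩ W j`, `m ≥ j + ρ` and
`N^ρ x ∈ M (m - 2ρ - 1)`, then `x ∈ M (m-1)`.  Downward induction on `j`. -/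
private lemma rmf_J {N : Module.End K V} {W M : ℤ → Submodule K V}
    {a : ℤ} (hWbot : ∀ w : ℤ, w ≤ a → W w = ⊥)
    (hMmono : Monotone M)
    (hM1 : ∀ w : ℤ, ∀ x ∈ M w, N x ∈ M (w - 2))
    (hNW : ∀ w : ℤ, ∀ x ∈ W w, N x ∈ W w)
    (hM2a : ∀ w : ℤ, ∀ r : ℕ, ∀ x ∈ M (w + r) ⊓ W w,
       (N ^ r) x ∈ (M (w - r - 1) ⊓ W w) ⊔ W (w - 1) →
       x ∈ (M (w + r - 1) ⊓ W w) ⊔ W (w - 1)) :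
    ∀ (n : ℕ) (j m : ℤ) (ρ : ℕ), j ≤ a + n → j + ρ ≤ m →
      ∀ x : V, x ∈ M m → x ∈ W j → (N ^ ρ) x ∈ M (m - 2 * ρ - 1) → x ∈ M (m - 1) := by
  intro n
  induction n with
  | zero =>
    intro j m ρ hj _ x _ hxW _
    have hx0 : x = 0 := by
      have hb := hWbot j (by omega)
      rw [hb] at hxW
      simpa using hxW
    simp [hx0]
  | succ n ih =>
    intro j m ρ hj hρm x hxM hxW hNx
    by_cases hc : j ≤ a + n
    · exact ih j m ρ hc hρm x hxM hxW hNx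
    · set r := (m - j).toNat with hr
      have hrz : (r : ℤ) = m - j := by omega
      have hρr : ρ ≤ r := by omega
      have hNrx : (N ^ r) x ∈ M (j - r - 1) := by
        have hsplit : (N : Module.End K V) ^ r = N ^ (r - ρ) * N ^ ρ := by
          rw [← pow_add, Nat.sub_add_cancel hρr]
        have h4 : (N ^ r) x = (N ^ (r - ρ)) ((N ^ ρ) x) := by rw [hsplit]; rfl
        rw [h4]
        exact rmf_memc (by omega) (rmf_powShift hM1 (r - ρ) _ _ hNx)
      have hNrW : (N ^ r) x ∈ W j := rmf_powW hNW r j x hxW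
      have hsup := hM2a j r x ⟨rmf_memc (by omega) hxM, hxW⟩
        (Submodule.mem_sup_left ⟨hNrx, hNrW⟩)
      rcases Submodule.mem_sup.mp hsup with ⟨x₁, hx₁, z, hz, hxsum⟩
      have hzeq : z = x - x₁ := by rw [← hxsum]; exact (add_sub_cancel_left x₁ z).symm
      have hx₁M : x₁ ∈ M (m - 1) := rmf_memc (by omega) hx₁.1
      have hzM : z ∈ M m := by rw [hzeq]; exact sub_mem hxM (hMmono (by omega) hx₁M)
      have hzNx : (N ^ ρ) z ∈ M (m - 2 * ρ - 1) := by
        rw [hzeq, map_sub]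
        exact sub_mem hNx (rmf_memc (by omega) (rmf_powShift hM1 ρ _ _ hx₁M))
      have hzres := ih (j - 1) m ρ (by omega) (by omega) z hzM hz hzNx
      rw [← hxsum]
      exact add_mem hx₁M hzres

/-- One-sided inclusion at a low index `k ≤ j`, using surjectivity of `N^{j-k}`. -/
private lemma rmf_low {N : Module.End K V} {W M M' : ℤ → Submodule K V}
    (hMmono : Monotone M) (hM'mono : Monotone M')
    (hM1 : ∀ w : ℤ, ∀ x ∈ M w, N x ∈ M (w - 2))
    (hM'1 : ∀ w : ℤ, ∀ x ∈ M' w, N x ∈ M' (w - 2))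
    (hNW : ∀ w : ℤ, ∀ x ∈ W w, N x ∈ W w)
    (hM2b : ∀ w : ℤ, ∀ r : ℕ, ∀ y ∈ M (w - r) ⊓ W w, ∃ x ∈ M (w + r) ⊓ W w,
       y - (N ^ r) x ∈ (M (w - r - 1) ⊓ W w) ⊔ W (w - 1))
    (j k : ℤ) (hk : k ≤ j)
    (htop : M (2 * j - k) ⊓ W j = M' (2 * j - k) ⊓ W j)
    (hprev : M (k - 1) ⊓ W j = M' (k - 1) ⊓ W j)
    (hH1 : M k ⊓ W (j - 1) = M' k ⊓ W (j - 1)) :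
    M k ⊓ W j ≤ M' k ⊓ W j := by
  rintro x ⟨hxM, hxW⟩
  set r := (j - k).toNat with hr
  have hrz : (r : ℤ) = j - k := by omega
  obtain ⟨ξ, hξ, hrem⟩ := hM2b j r x ⟨rmf_memc (by omega) hxM, hxW⟩
  have hξ2 : ξ ∈ M' (2 * j - k) ⊓ W j := by
    rw [← htop]; exact ⟨rmf_memc (by omega) hξ.1, hξ.2⟩
  have hNξM' : (N ^ r) ξ ∈ M' k := rmf_memc (by omega) (rmf_powShift hM'1 r _ _ hξ2.1)
  have hNξM : (N ^ r) ξ ∈ M k := rmf_memc (by omega) (rmf_powShift hM1 r _ _ hξ.1)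
  rcases Submodule.mem_sup.mp hrem with ⟨c, hc, z, hz, hsum⟩
  have hc2 : c ∈ M' (k - 1) ⊓ W j := by
    rw [← hprev]; exact ⟨rmf_memc (by omega) hc.1, hc.2⟩
  have hzeq : z = x - (N ^ r) ξ - c := by
    rw [← hsum]; exact (add_sub_cancel_left c z).symm
  have hzMk : z ∈ M k ⊓ W (j - 1) := by
    refine ⟨?_, hz⟩
    rw [hzeq]
    exact sub_mem (sub_mem hxM hNξM)
      (hMmono (show (k - 1 : ℤ) ≤ k by omega)
        (rmf_memc (show j - (r : ℤ) - 1 = k - 1 by omega) hc.1))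
  rw [hH1] at hzMk
  have hxeq : x = (N ^ r) ξ + (c + z) := by rw [hsum]; abel
  refine ⟨?_, hxW⟩
  rw [hxeq]
  exact add_mem hNξM' (add_mem (hM'mono (by omega) hc2.1) hzMk.1)

/-- One-sided inclusion at the index `j + s`, using injectivity for `M'` and the
global injectivity lemma for `M`. -/
private lemma rmf_high {N : Module.End K V} {W M M' : ℤ → Submodule K V}
    {a : ℤ} (hWbot : ∀ w : ℤ, w ≤ a → W w = ⊥)
    (hMmono : Monotone M) (hM'mono : Monotone M')
    (hM1 : ∀ w : ℤ, ∀ x ∈ M w, N x ∈ M (w - 2))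
    (hM'1 : ∀ w : ℤ, ∀ x ∈ M' w, N x ∈ M' (w - 2))
    (hNW : ∀ w : ℤ, ∀ x ∈ W w, N x ∈ W w)
    (hM2a : ∀ w : ℤ, ∀ r : ℕ, ∀ x ∈ M (w + r) ⊓ W w,
       (N ^ r) x ∈ (M (w - r - 1) ⊓ W w) ⊔ W (w - 1) →
       x ∈ (M (w + r - 1) ⊓ W w) ⊔ W (w - 1))
    (hM'2a : ∀ w : ℤ, ∀ r : ℕ, ∀ x ∈ M' (w + r) ⊓ W w,
       (N ^ r) x ∈ (M' (w - r - 1) ⊓ W w) ⊔ W (w - 1) →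
       x ∈ (M' (w + r - 1) ⊓ W w) ⊔ W (w - 1))
    {b' : ℤ} (hM'top : ∀ w : ℤ, b' ≤ w → M' w = ⊤)
    (j : ℤ) (s : ℕ)
    (hA : ∀ k : ℤ, k ≤ j - s - 1 → M k ⊓ W j = M' k ⊓ W j)
    (hsucc : M (j + s + 1) ⊓ W j = M' (j + s + 1) ⊓ W j)
    (hH1 : ∀ k : ℤ, M k ⊓ W (j - 1) = M' k ⊓ W (j - 1)) :
    M (j + s) ⊓ W j ≤ M' (j + s) ⊓ W j := by
  rintro x ⟨hxM, hxW⟩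
  have step1 : ∀ (d t : ℕ), b' ≤ j + t + d → s ≤ t →
      x ∈ (M' (j + t) ⊓ W j) ⊔ W (j - 1) := by
    intro d
    induction d with
    | zero =>
      intro t hb _
      refine Submodule.mem_sup_left ⟨?_, hxW⟩
      rw [hM'top (j + t) (by omega)]
      trivial
    | succ d ih =>
      intro t hb hst
      by_cases hc : b' ≤ j + t + d
      · exact ih t hc hst
      · rcases Submodule.mem_sup.mp (ih (t + 1) (by omega) (by omega)) with
          ⟨y, hy, z, hz, hxsum⟩
        have hyeq : y = x - z := by rw [← hxsum]; exact (add_sub_cancel_right y z).symm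
        have hNx1 : (N ^ (t + 1)) x ∈ M' (j - ((t + 1 : ℕ) : ℤ) - 1) ⊓ W j := by
          have hAk := hA (j - ((t + 1 : ℕ) : ℤ) - 1) (by omega)
          rw [← hAk]
          exact ⟨hMmono (by omega) (rmf_powShift hM1 (t + 1) _ _ hxM),
            rmf_powW hNW (t + 1) j x hxW⟩
        have hprem : (N ^ (t + 1)) y ∈ (M' (j - ((t + 1 : ℕ) : ℤ) - 1) ⊓ W j) ⊔ W (j - 1) := by
          rw [hyeq, map_sub]
          exact sub_mem (Submodule.mem_sup_left hNx1)
            (Submodule.mem_sup_right (rmf_powW hNW (t + 1) (j - 1) z hz))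
        have hy2 := hM'2a j (t + 1) y hy hprem
        have hidx : j + ((t + 1 : ℕ) : ℤ) - 1 = j + (t : ℤ) := by push_cast; ring
        rw [hidx] at hy2
        rw [← hxsum]
        exact add_mem hy2 (Submodule.mem_sup_right hz)
  rcases Submodule.mem_sup.mp (step1 (b' - (j + s)).toNat s (by omega) le_rfl) with
    ⟨y, hy, z, hz, hxsum⟩
  have hzeq : z = x - y := by rw [← hxsum]; exact (add_sub_cancel_left y z).symm
  have hyM : y ∈ M (j + s + 1) := by
    have h6 : y ∈ M' (j + (s : ℤ) + 1) ⊓ W j := ⟨hM'mono (by omega) hy.1, hy.2⟩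
    rw [← hsucc] at h6
    exact h6.1
  have hzM : z ∈ M (j + (s : ℤ) + 1) := by
    rw [hzeq]; exact sub_mem (hMmono (by omega) hxM) hyM
  have hNzM : (N ^ (s + 1)) z ∈ M (j + (s : ℤ) + 1 - 2 * ((s + 1 : ℕ) : ℤ) - 1) := by
    rw [hzeq, map_sub]
    refine sub_mem (rmf_memc (by omega) (rmf_powShift hM1 (s + 1) _ _ hxM)) ?_
    have h7 : (N ^ (s + 1)) y ∈ M' (j + (s : ℤ) - 2 * ((s + 1 : ℕ) : ℤ)) ⊓ W j :=
      ⟨rmf_powShift hM'1 (s + 1) _ _ hy.1, rmf_powW hNW (s + 1) j y hy.2⟩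
    have hAk := hA (j + (s : ℤ) - 2 * ((s + 1 : ℕ) : ℤ)) (by omega)
    rw [← hAk] at h7
    exact rmf_memc (by omega) h7.1
  have hzres : z ∈ M (j + (s : ℤ) + 1 - 1) :=
    rmf_J hWbot hMmono hM1 hNW hM2a ((j - 1 - a).toNat) (j - 1) (j + (s : ℤ) + 1) (s + 1)
      (by omega) (by omega) z hzM hz hNzM
  have hz' : z ∈ M (j + (s : ℤ)) := rmf_memc (by omega) hzres
  have hz'' : z ∈ M' (j + (s : ℤ)) := by
    have h8 : z ∈ M (j + (s : ℤ)) ⊓ W (j - 1) := ⟨hz', hz⟩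
    rw [hH1] at h8
    exact h8.1
  refine ⟨?_, hxW⟩
  rw [← hxsum]
  exact add_mem hy.1 hz''

end RMFAux

/-- Uniqueness of the relative monodromy filtration. -/
theorem relative_monodromy_filtration_unique
    {K V : Type*} [Field K] [AddCommGroup V] [Module K V] [FiniteDimensional K V]
    (N : Module.End K V) (hNnil : IsNilpotent N)
    (W : ℤ → Submodule K V) (hW : IsFiniteFiltration W)
    (hNW : ∀ w : ℤ, ∀ x ∈ W w, N x ∈ W w)
    (𝒲 𝒲' : ℤ → Submodule K V)
    (h1 : IsRelMonodromy N W 𝒲) (h2 : IsRelMonodromy N W 𝒲') :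
    𝒲 = 𝒲' := by
  obtain ⟨hWmono, ⟨aW, haW⟩, ⟨bW, hbW⟩⟩ := hW
  obtain ⟨⟨hMmono, ⟨aM, haM⟩, ⟨bM, hbM⟩⟩, hM1, hM2⟩ := h1
  obtain ⟨⟨hM'mono, ⟨aM', haM'⟩, ⟨bM', hbM'⟩⟩, hM'1, hM'2⟩ := h2
  have hM2a := fun w r => (hM2 w r).1
  have hM2b := fun w r => (hM2 w r).2
  have hM'2a := fun w r => (hM'2 w r).1
  have hM'2b := fun w r => (hM'2 w r).2
  have hA0M : min aM aM' ≤ aM := min_le_left _ _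
  have hA0M' : min aM aM' ≤ aM' := min_le_right _ _
  have key : ∀ (n : ℕ) (j : ℤ), j ≤ aW + n → ∀ k : ℤ, 𝒲 k ⊓ W j = 𝒲' k ⊓ W j := by
    intro n
    induction n with
    | zero =>
      intro j hj k
      rw [haW j (by omega)]
      simp
    | succ n ih =>
      intro j hj
      by_cases hc : j ≤ aW + n
      · exact ih j hc
      · have hH1 : ∀ k : ℤ, 𝒲 k ⊓ W (j - 1) = 𝒲' k ⊓ W (j - 1) := ih (j - 1) (by omega)
        have step : ∀ s : ℕ,
            ((∀ k : ℤ, j + ((s + 1 : ℕ) : ℤ) ≤ k → 𝒲 k ⊓ W j = 𝒲' k ⊓ W j) ∧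
             (∀ k : ℤ, k ≤ j - ((s + 1 : ℕ) : ℤ) - 1 → 𝒲 k ⊓ W j = 𝒲' k ⊓ W j)) →
            ((∀ k : ℤ, j + (s : ℤ) ≤ k → 𝒲 k ⊓ W j = 𝒲' k ⊓ W j) ∧
             (∀ k : ℤ, k ≤ j - (s : ℤ) - 1 → 𝒲 k ⊓ W j = 𝒲' k ⊓ W j)) := by
          intro s hP
          have hA : ∀ k : ℤ, k ≤ j - (s : ℤ) - 1 → 𝒲 k ⊓ W j = 𝒲' k ⊓ W j := by
            have He : ∀ (e : ℕ) (k : ℤ), k ≤ j - (s : ℤ) - 1 → k ≤ min aM aM' + e →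
                𝒲 k ⊓ W j = 𝒲' k ⊓ W j := by
              intro e
              induction e with
              | zero =>
                intro k hk hke
                rw [haM k (by omega), haM' k (by omega)]
              | succ e ihe =>
                intro k hk hke
                by_cases hc2 : k ≤ min aM aM' + e
                · exact ihe k hk hc2
                · have htop : 𝒲 (2 * j - k) ⊓ W j = 𝒲' (2 * j - k) ⊓ W j :=
                    hP.1 (2 * j - k) (by omega)
                  have hprev := ihe (k - 1) (by omega) (by omega)
                  exact le_antisymm
                    (rmf_low hMmono hM'mono hM1 hM'1 hNW hM2b j k (by omega)
                      htop hprev (hH1 k))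
                    (rmf_low hM'mono hMmono hM'1 hM1 hNW hM'2b j k (by omega)
                      htop.symm hprev.symm (hH1 k).symm)
            intro k hk
            exact He (k - min aM aM').toNat k hk (by omega)
          refine ⟨?_, hA⟩
          intro k hk
          by_cases hk1 : j + ((s + 1 : ℕ) : ℤ) ≤ k
          · exact hP.1 k hk1
          · have hks : k = j + (s : ℤ) := by omega
            subst hks
            have hsucc : 𝒲 (j + (s : ℤ) + 1) ⊓ W j = 𝒲' (j + (s : ℤ) + 1) ⊓ W j :=
              hP.1 _ (by omega)
            have hA' : ∀ k : ℤ, k ≤ j - (s : ℤ) - 1 → 𝒲' k ⊓ W j = 𝒲 k ⊓ W j :=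
              fun k hk => (hA k hk).symm
            have hH1' : ∀ k : ℤ, 𝒲' k ⊓ W (j - 1) = 𝒲 k ⊓ W (j - 1) :=
              fun k => (hH1 k).symm
            exact le_antisymm
              (rmf_high haW hMmono hM'mono hM1 hM'1 hNW hM2a hM'2a hbM' j s hA hsucc hH1)
              (rmf_high haW hM'mono hMmono hM'1 hM1 hNW hM'2a hM2a hbM j s hA'
                hsucc.symm hH1')
        have down : ∀ (d s : ℕ),
            (bM - j).toNat + (bM' - j).toNat + (j - aM).toNat + (j - aM').toNat ≤ s + d →
            (∀ k : ℤ, j + (s : ℤ) ≤ k → 𝒲 k ⊓ W j = 𝒲' k ⊓ W j) ∧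
            (∀ k : ℤ, k ≤ j - (s : ℤ) - 1 → 𝒲 k ⊓ W j = 𝒲' k ⊓ W j) := by
          intro d
          induction d with
          | zero =>
            intro s hs
            constructor
            · intro k hk
              rw [hbM k (by omega), hbM' k (by omega)]
            · intro k hk
              rw [haM k (by omega), haM' k (by omega)]
          | succ d ihd =>
            intro s hs
            by_cases hc2 :
                (bM - j).toNat + (bM' - j).toNat + (j - aM).toNat + (j - aM').toNat ≤ s + d
            · exact ihd s hc2
            · exact step s (ihd (s + 1) (by omega))
        have Pall : ∀ s : ℕ,
            (∀ k : ℤ, j + (s : ℤ) ≤ k → 𝒲 k ⊓ W j = 𝒲' k ⊓ W j) ∧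
            (∀ k : ℤ, k ≤ j - (s : ℤ) - 1 → 𝒲 k ⊓ W j = 𝒲' k ⊓ W j) :=
          fun s => down
            ((bM - j).toNat + (bM' - j).toNat + (j - aM).toNat + (j - aM').toNat) s
            (by omega)
        intro k
        by_cases hjk : j ≤ k
        · exact (Pall (k - j).toNat).1 k (by omega)
        · exact (Pall (j - k - 1).toNat).2 k (by omega)
  funext k
  have hfin := key (max aW bW - aW).toNat (max aW bW) (by omega) k
  have hWt : W (max aW bW) = ⊤ := hbW _ (le_max_right _ _)
  rw [hWt, inf_top_eq, inf_top_eq] at hfin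
  exact hfin
end

section
/- Let V be a finite-dimensional vector space over a field of characteristic 0, W a finite increasing filtration on V, N : V → V nilpotent preserving W, and let 𝒲 be the relative monodromy filtration of N with respect to W. Then for any N' : V → V commuting with N and preserving W (i.e. N'(W_w) ⊆ W_w for all w), exp(N')𝒲 is the relative monodromy filtration of exp(N') N exp(−N') with respect to exp(N')W. In particular, if additionally N' is nilpotent, N' N = N N' and N'(W_w) ⊆ W_w, then exp(N')(𝒲_w) = 𝒲_w for all w. -/
/-- The exponential of a (nilpotent) endomorphism of a finite-dimensional space:
`∑_{i ≤ finrank V} (1/i!) N^i`, which equals the usual exponential series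
for nilpotent `N`. -/
noncomputable def expNil {K V : Type*} [Field K] [AddCommGroup V] [Module K V]
    (N : Module.End K V) : Module.End K V :=
  ∑ i ∈ Finset.range (Module.finrank K V + 1), ((i.factorial : K))⁻¹ • N ^ i

lemma Int.forall_of_forall_le_of_sub_one {P : ℤ → Prop} (a : ℤ) (base : ∀ w ≤ a, P w)
    (step : ∀ w, a < w → P (w - 1) → P w) (w : ℤ) : P w := by
  rcases le_or_gt w a with hw | hw
  · exact base w hw
  refine Int.leInduction (motive := fun n _ => P n) (base a le_rfl) (fun n _ ih => ?_) w hw.le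
  exact step (n + 1) (by omega) (by simpa using ih)

lemma forall_of_large_measure_of_step {α : Type*} {P : α → Prop} (μ : α → ℕ) (B : ℕ)
    (large : ∀ a, B ≤ μ a → P a) (step : ∀ a, (∀ b, μ a < μ b → P b) → P a) (a : α) : P a := by
  induction hn : B - μ a using Nat.strong_induction_on generalizing a with
  | _ n ih =>
    by_cases ha : B ≤ μ a
    · exact large a ha
    · exact step a fun b hb => ih (B - μ b) (by omega) b rfl

section Exp

variable {K V : Type*} [Field K] [AddCommGroup V] [Module K V]

lemma IsNilpotent.pow_finrank_eq_zero [FiniteDimensional K V] {A : Module.End K V}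
    (hA : IsNilpotent A) : A ^ Module.finrank K V = 0 := by
  simpa [hA.charpoly_eq_X_pow_finrank] using A.aeval_self_charpoly

lemma expNil_mul_expNil_neg [CharZero K] [FiniteDimensional K V] {A : Module.End K V}
    (hA : IsNilpotent A) : expNil A * expNil (-A) = 1 := by
  -- `IsNilpotent.exp` needs a `ℚ`-module structure; take the one coming from `K`.
  let _ : Module ℚ (Module.End K V) := Module.compHom _ (algebraMap ℚ K)
  have hexp : ∀ B : Module.End K V, IsNilpotent B → expNil B = IsNilpotent.exp B := by
    intro B hB
    rw [IsNilpotent.exp_eq_sum (pow_eq_zero_of_le (Nat.le_succ _) hB.pow_finrank_eq_zero)]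
    change _ = ∑ i ∈ _, algebraMap ℚ K (i.factorial : ℚ)⁻¹ • B ^ i
    simp [expNil]
  rw [hexp A hA, hexp (-A) hA.neg, IsNilpotent.exp_mul_exp_neg_self hA]

lemma Commute.expNil_left {A B : Module.End K V} (h : Commute A B) : Commute (expNil A) B :=
  Commute.sum_left _ _ _ fun i _ => (h.pow_left i).smul_left _

lemma expNil_apply_mem {A : Module.End K V} {p : Submodule K V} (hp : ∀ x ∈ p, A x ∈ p)
    {x : V} (hx : x ∈ p) : expNil A x ∈ p := by
  simp only [expNil, LinearMap.sum_apply, LinearMap.smul_apply]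
  exact p.sum_mem fun i _ => p.smul_mem _ (Module.End.pow_apply_mem_of_forall_mem i hp x hx)

lemma Submodule.map_expNil_eq [CharZero K] [FiniteDimensional K V] {A : Module.End K V}
    (hA : IsNilpotent A) {p : Submodule K V} (hp : ∀ x ∈ p, A x ∈ p) : p.map (expNil A) = p := by
  refine le_antisymm (Submodule.map_le_iff_le_comap.2 fun x hx => expNil_apply_mem hp hx)
    fun x hx => ⟨expNil (-A) x, expNil_apply_mem (fun y hy => ?_) hx, ?_⟩
  · simpa using p.neg_mem (hp y hy)
  · rw [← Module.End.mul_apply, expNil_mul_expNil_neg hA, Module.End.one_apply]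

end Exp

section Transport

variable {K V V' : Type*} [Field K] [AddCommGroup V] [Module K V] [AddCommGroup V'] [Module K V']
  {W 𝒲 : ℤ → Submodule K V}

lemma IsFiniteFiltration.map_linearEquiv (hW : IsFiniteFiltration W) (e : V ≃ₗ[K] V') :
    IsFiniteFiltration fun w => (W w).map (e : V →ₗ[K] V') := by
  obtain ⟨hmono, ⟨a, ha⟩, ⟨b, hb⟩⟩ := hW
  exact ⟨fun u v huv => Submodule.map_mono (hmono huv), ⟨a, fun w hw => by simp [ha w hw]⟩,
    ⟨b, fun w hw => by simp [hb w hw]⟩⟩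

lemma IsRelMonodromy.map_linearEquiv {N : Module.End K V} (h : IsRelMonodromy N W 𝒲)
    (e : V ≃ₗ[K] V') :
    IsRelMonodromy (e.conj N) (fun w => (W w).map (e : V →ₗ[K] V'))
      (fun w => (𝒲 w).map (e : V →ₗ[K] V')) := by
  have hpow : ∀ (r : ℕ) (x : V'), (e.conj N ^ r) x = e ((N ^ r) (e.symm x)) := by
    intro r x
    induction r with
    | zero => simp
    | succ r ih =>
      rw [pow_succ', Module.End.mul_apply, ih, LinearEquiv.conj_apply_apply,
        e.symm_apply_apply, pow_succ', Module.End.mul_apply]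
  simp only [IsRelMonodromy, ← Submodule.map_inf _ e.injective, ← Submodule.map_sup,
    Submodule.mem_map_equiv, hpow, LinearEquiv.conj_apply_apply, LinearEquiv.symm_apply_apply]
  refine ⟨h.1.map_linearEquiv e, fun w x hx => h.2.1 w _ hx, fun w r => ⟨fun x hx hNx =>
    (h.2.2 w r).1 _ hx hNx, fun y hy => ?_⟩⟩
  obtain ⟨x, hx, hyx⟩ := (h.2.2 w r).2 _ hy
  exact ⟨e x, by simpa using hx, by simpa using hyx⟩

end Transport

section Uniqueness

variable {K V : Type*} [Field K] [AddCommGroup V] [Module K V]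
  {N : Module.End K V} {W M M' : ℤ → Submodule K V}

namespace IsRelMonodromy

lemma pow_apply_mem (hM : IsRelMonodromy N W M) {k j : ℤ} {x : V} (hx : x ∈ M k) (s : ℕ)
    (hj : k - 2 * s ≤ j) : (N ^ s) x ∈ M j := by
  induction s generalizing j with
  | zero => exact hM.1.1 (by simpa using hj) (by simpa using hx)
  | succ s ih =>
    rw [pow_succ', Module.End.mul_apply]
    exact hM.1.1 (by push_cast at hj; omega) (hM.2.1 _ _ (ih le_rfl))

lemma mem_sup_of_pow_apply_mem (hM : IsRelMonodromy N W M) {w i k : ℤ} {r : ℕ}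
    (hi : i + 1 = w + r) (hk : k = w - r - 1) {x : V} (hx : x ∈ M (i + 1) ⊓ W w)
    (hNx : (N ^ r) x ∈ M k ⊓ W w ⊔ W (w - 1)) : x ∈ M i ⊓ W w ⊔ W (w - 1) := by
  obtain rfl : i = w + r - 1 := by omega
  subst hk
  exact (hM.2.2 w r).1 x (by simpa using hx) hNx

lemma exists_sub_pow_apply_mem (hM : IsRelMonodromy N W M) {w j k : ℤ} {r : ℕ}
    (hj : j = w + r) (hk : k = w - r) {y : V} (hy : y ∈ M k ⊓ W w) :
    ∃ x ∈ M j ⊓ W w, y - (N ^ r) x ∈ M (k - 1) ⊓ W w ⊔ W (w - 1) := by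
  subst hj hk
  exact (hM.2.2 w r).2 y hy

lemma mem_of_forall_pow_apply_mem (hW : IsFiniteFiltration W)
    (hNW : ∀ w : ℤ, ∀ x ∈ W w, N x ∈ W w) (hM : IsRelMonodromy N W M) {j : ℤ} :
    ∀ v ≤ j, ∀ h ∈ M (j + 1) ⊓ W v,
      (∀ s : ℕ, j + 1 - v ≤ s → (N ^ s) h ∈ M (j - 2 * s)) → h ∈ M j := by
  obtain ⟨a, ha⟩ := hW.2.1
  refine Int.forall_of_forall_le_of_sub_one a (fun v hv _ h hh _ => ?_) fun v _ ih hv h hh hs => ?_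
  · rw [ha v hv, inf_bot_eq, Submodule.mem_bot] at hh
    exact hh ▸ zero_mem _
  obtain ⟨hhM, hhW⟩ := Submodule.mem_inf.1 hh
  obtain ⟨r, hr⟩ : ∃ r : ℕ, (r : ℤ) = j + 1 - v := ⟨_, Int.toNat_of_nonneg (by omega)⟩
  have hNh : (N ^ r) h ∈ M (j - 2 * r) ⊓ W v :=
    Submodule.mem_inf.2 ⟨hs r hr.ge, Module.End.pow_apply_mem_of_forall_mem r (hNW v) h hhW⟩
  obtain ⟨p, hp, q, hq, rfl⟩ := Submodule.mem_sup.1 <|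
    hM.mem_sup_of_pow_apply_mem (by omega) (by omega) hh (Submodule.mem_sup_left hNh)
  have hpM : p ∈ M j := (Submodule.mem_inf.1 hp).1
  have hqM : q ∈ M (j + 1) := by
    simpa using Submodule.sub_mem _ hhM (hM.1.1 (by omega) hpM)
  refine add_mem hpM (ih (by omega) q (Submodule.mem_inf.2 ⟨hqM, hq⟩) fun s hs' => ?_)
  have hNq : (N ^ s) q = (N ^ s) (p + q) - (N ^ s) p := by rw [map_add]; abel
  rw [hNq]
  exact sub_mem (hs s (by omega)) (hM.pow_apply_mem hpM s le_rfl)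

lemma inf_le_of_lt (hM : IsRelMonodromy N W M) (hM' : IsRelMonodromy N W M') {w k : ℤ}
    (hk : k < w) (hC : M' k ⊓ W (w - 1) ≤ M k) (hmirror : M' (2 * w - k) ⊓ W w ≤ M (2 * w - k))
    (hprev : M' (k - 1) ⊓ W w ≤ M (k - 1)) : M' k ⊓ W w ≤ M k := by
  intro y hy
  obtain ⟨r, hr⟩ : ∃ r : ℕ, (r : ℤ) = w - k := ⟨_, Int.toNat_of_nonneg (by omega)⟩
  obtain ⟨x, hx, hyx⟩ :=
    hM'.exists_sub_pow_apply_mem (j := 2 * w - k) (r := r) (by omega) (by omega) hy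
  obtain ⟨y', hy', l, hl, hsum⟩ := Submodule.mem_sup.1 hyx
  have hy'M' : y' ∈ M' (k - 1) := (Submodule.mem_inf.1 hy').1
  have hNx : (N ^ r) x ∈ M k := hM.pow_apply_mem (hmirror hx) r (by omega)
  have hNx' : (N ^ r) x ∈ M' k := hM'.pow_apply_mem (Submodule.mem_inf.1 hx).1 r (by omega)
  have hy'M : y' ∈ M k := hM.1.1 (by omega) (hprev hy')
  have hlM' : l ∈ M' k := by
    have hl_eq : l = y - (N ^ r) x - y' := by rw [← hsum]; abel
    rw [hl_eq]
    exact sub_mem (sub_mem (Submodule.mem_inf.1 hy).1 hNx') (hM'.1.1 (by omega) hy'M')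
  have hy_eq : y = (N ^ r) x + y' + l := by rw [add_assoc, hsum]; abel
  rw [hy_eq]
  exact add_mem (add_mem hNx hy'M) (hC (Submodule.mem_inf.2 ⟨hlM', hl⟩))

lemma inf_le_of_le (hW : IsFiniteFiltration W) (hNW : ∀ w : ℤ, ∀ x ∈ W w, N x ∈ W w)
    (hM : IsRelMonodromy N W M) (hM' : IsRelMonodromy N W M') {w k : ℤ} (hk : w ≤ k)
    (hnext : M' (k + 1) ⊓ W w ≤ M (k + 1)) (hlow : ∀ j ≤ 2 * w - 2 - k, M' j ⊓ W w ≤ M j) :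
    M' k ⊓ W w ≤ M k := by
  intro x hx
  obtain ⟨hxM', hxW⟩ := Submodule.mem_inf.1 hx
  obtain ⟨r, hr⟩ : ∃ r : ℕ, (r : ℤ) = k + 1 - w := ⟨_, Int.toNat_of_nonneg (by omega)⟩
  have hNxW : ∀ s : ℕ, (N ^ s) x ∈ W w := fun s =>
    Module.End.pow_apply_mem_of_forall_mem s (hNW w) x hxW
  have hNx : ∀ s : ℕ, r ≤ s → (N ^ s) x ∈ M (k - 2 * s) ⊓ W w := fun s hs =>
    Submodule.mem_inf.2 ⟨hlow _ (by omega)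
      (Submodule.mem_inf.2 ⟨hM'.pow_apply_mem hxM' s le_rfl, hNxW s⟩), hNxW s⟩
  have hx1 : x ∈ M (k + 1) ⊓ W w :=
    Submodule.mem_inf.2 ⟨hnext (Submodule.mem_inf.2 ⟨hM'.1.1 (by omega) hxM', hxW⟩), hxW⟩
  obtain ⟨m, hm, h, hh, rfl⟩ := Submodule.mem_sup.1 <|
    hM.mem_sup_of_pow_apply_mem (by omega) (by omega) hx1 (Submodule.mem_sup_left (hNx r le_rfl))
  have hmM : m ∈ M k := (Submodule.mem_inf.1 hm).1
  have hhM : h ∈ M (k + 1) := by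
    simpa using Submodule.sub_mem _ (Submodule.mem_inf.1 hx1).1 (hM.1.1 (by omega) hmM)
  refine add_mem hmM (hM.mem_of_forall_pow_apply_mem hW hNW (w - 1) (by omega) h
    (Submodule.mem_inf.2 ⟨hhM, hh⟩) fun s hs => ?_)
  have hNh : (N ^ s) h = (N ^ s) (m + h) - (N ^ s) m := by rw [map_add]; abel
  rw [hNh]
  exact sub_mem (Submodule.mem_inf.1 (hNx s (by omega))).1 (hM.pow_apply_mem hmM s le_rfl)

lemma inf_le_of_inf_pred_le (hW : IsFiniteFiltration W) (hNW : ∀ w : ℤ, ∀ x ∈ W w, N x ∈ W w)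
    (hM : IsRelMonodromy N W M) (hM' : IsRelMonodromy N W M') {w : ℤ}
    (hC : ∀ k, M' k ⊓ W (w - 1) ≤ M k) (k : ℤ) : M' k ⊓ W w ≤ M k := by
  obtain ⟨kt, hkt⟩ := hM.1.2.2
  obtain ⟨kb, hkb⟩ := hM'.1.2.1
  -- Each level `k` depends only on levels farther from `w - 1/2`, so induct from the outside in.
  refine forall_of_large_measure_of_step (P := fun k => M' k ⊓ W w ≤ M k)
    (fun k => (2 * k - 2 * w + 1).natAbs) ((2 * (kt - w)).natAbs + (2 * (w - kb)).natAbs + 2)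
    (fun k hk => ?_) (fun k ih => ?_) k
  · rcases le_or_gt kt k with h | h
    · simp [hkt k h]
    · simp [hkb k (by omega)]
  · rcases le_or_gt w k with h | h
    · exact hM.inf_le_of_le hW hNW hM' h (ih _ (by omega)) fun j hj => ih j (by omega)
    · exact hM.inf_le_of_lt hM' h (hC k) (ih _ (by omega)) (ih _ (by omega))

theorem le (hW : IsFiniteFiltration W) (hNW : ∀ w : ℤ, ∀ x ∈ W w, N x ∈ W w)
    (hM : IsRelMonodromy N W M) (hM' : IsRelMonodromy N W M') (k : ℤ) : M' k ≤ M k := by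
  obtain ⟨a, ha⟩ := hW.2.1
  obtain ⟨b, hb⟩ := hW.2.2
  have hC : ∀ w k, M' k ⊓ W w ≤ M k := Int.forall_of_forall_le_of_sub_one a
    (fun w hw k => by simp [ha w hw]) fun w _ ih => hM.inf_le_of_inf_pred_le hW hNW hM' ih
  simpa [hb b le_rfl] using hC b k

theorem unique (hW : IsFiniteFiltration W) (hNW : ∀ w : ℤ, ∀ x ∈ W w, N x ∈ W w)
    (hM : IsRelMonodromy N W M) (hM' : IsRelMonodromy N W M') : M = M' :=
  funext fun k => le_antisymm (hM'.le hW hNW hM k) (hM.le hW hNW hM' k)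

end IsRelMonodromy

end Uniqueness

theorem relative_monodromy_filtration_exp_conjugate_general
    {K V : Type*} [Field K] [CharZero K] [AddCommGroup V] [Module K V] [FiniteDimensional K V]
    (N : Module.End K V)
    (W : ℤ → Submodule K V) (hW : IsFiniteFiltration W)
    (hNW : ∀ w : ℤ, ∀ x ∈ W w, N x ∈ W w)
    (𝒲 : ℤ → Submodule K V) (h𝒲 : IsRelMonodromy N W 𝒲)
    (N' : Module.End K V) (hN'nil : IsNilpotent N')
    (hcomm : N' * N = N * N')
    (hN'W : ∀ w : ℤ, ∀ x ∈ W w, N' x ∈ W w) :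
    IsRelMonodromy (expNil N' * N * expNil (-N'))
      (fun w => (W w).map (expNil N')) (fun w => (𝒲 w).map (expNil N')) ∧
    (∀ w : ℤ, (𝒲 w).map (expNil N') = 𝒲 w) := by
  have hinv : expNil N' * expNil (-N') = 1 := expNil_mul_expNil_neg hN'nil
  have hinv' : expNil (-N') * expNil N' = 1 := by
    simpa using expNil_mul_expNil_neg hN'nil.neg
  let e : V ≃ₗ[K] V := LinearEquiv.ofLinearMap (expNil N') (expNil (-N')) hinv hinv'
  have hconj : expNil N' * N * expNil (-N') = N := by
    rw [(Commute.expNil_left hcomm).eq, mul_assoc, hinv, mul_one]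
  have hWe : (fun w => (W w).map (expNil N')) = W :=
    funext fun w => (W w).map_expNil_eq hN'nil (hN'W w)
  have h𝒲e : IsRelMonodromy (expNil N' * N * expNil (-N'))
      (fun w => (W w).map (expNil N')) (fun w => (𝒲 w).map (expNil N')) :=
    h𝒲.map_linearEquiv e
  have hfix : IsRelMonodromy N W fun w => (𝒲 w).map (expNil N') := by
    rwa [hconj, hWe] at h𝒲e
  exact ⟨h𝒲e, fun w => congrFun (h𝒲.unique hW hNW hfix).symm w⟩

/-- Transport of the relative monodromy filtration under `exp(N')`, for `N'` nilpotent,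
commuting with `N` and preserving `W`; in particular `exp(N')` preserves `𝒲`. -/
theorem relative_monodromy_filtration_exp_conjugate
    {K V : Type*} [Field K] [CharZero K] [AddCommGroup V] [Module K V] [FiniteDimensional K V]
    (N : Module.End K V) (hNnil : IsNilpotent N)
    (W : ℤ → Submodule K V) (hW : IsFiniteFiltration W)
    (hNW : ∀ w : ℤ, ∀ x ∈ W w, N x ∈ W w)
    (𝒲 : ℤ → Submodule K V) (h𝒲 : IsRelMonodromy N W 𝒲)
    (N' : Module.End K V) (hN'nil : IsNilpotent N')
    (hcomm : N' * N = N * N')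
    (hN'W : ∀ w : ℤ, ∀ x ∈ W w, N' x ∈ W w) :
    IsRelMonodromy (expNil N' * N * expNil (-N'))
      (fun w => (W w).map (expNil N')) (fun w => (𝒲 w).map (expNil N')) ∧
    (∀ w : ℤ, (𝒲 w).map (expNil N') = 𝒲 w) :=
  relative_monodromy_filtration_exp_conjugate_general N W hW hNW 𝒲 h𝒲 N' hN'nil hcomm hN'W
end

section
/- Let V be a finite-dimensional vector space over a field, with endomorphisms γ₀, γ₁, γ₂ where γ₀, γ₁ are invertible, satisfying γ₀ γ₁ γ₀^{-1} = γ₁ γ₂, with γ₂ unipotent (γ₂ − 1 nilpotent) and γ₂ commuting with γ₁. Then for every c in the field, γ₀^{-1} preserves the generalized eigenspace V_c = ⋃_n Ker((γ₁ − c)^n) of γ₁. -/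
/-- If `γ₀ γ₁ γ₀⁻¹ = γ₁ γ₂` with `γ₂` unipotent and commuting with `γ₁`, then `γ₀⁻¹`
preserves each generalized eigenspace `V_c = ⋃ₙ Ker((γ₁ - c)ⁿ)` of `γ₁`. -/
theorem inv_preserves_generalized_eigenspace
    {K V : Type*} [Field K] [AddCommGroup V] [Module K V] [FiniteDimensional K V]
    (γ₀ γ₁ : V ≃ₗ[K] V) (γ₂ : Module.End K V)
    (hrel : ∀ x : V, γ₀ (γ₁ (γ₀.symm x)) = γ₁ (γ₂ x))
    (hunip : IsNilpotent (γ₂ - 1))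
    (hcomm : ∀ x : V, γ₂ (γ₁ x) = γ₁ (γ₂ x))
    (c : K) (x : V)
    (hx : ∃ n : ℕ, (((γ₁ : Module.End K V) - c • 1) ^ n) x = 0) :
    ∃ m : ℕ, (((γ₁ : Module.End K V) - c • 1) ^ m) (γ₀.symm x) = 0 := by
  obtain ⟨n, hn⟩ := hx
  obtain ⟨r, hr⟩ := hunip
  set a : Module.End K V := (γ₁ : Module.End K V) - c • 1 with ha
  have hcg : Commute (γ₁ : Module.End K V) γ₂ := LinearMap.ext fun v => (hcomm v).symm
  have hc1 : Commute (c • (1 : Module.End K V)) γ₂ := (Commute.one_left γ₂).smul_left c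
  have hag : Commute a γ₂ := hcg.sub_left hc1
  have haN : Commute a (γ₂ - 1) := hag.sub_right (Commute.one_right a)
  set b : Module.End K V := a * γ₂ + c • (γ₂ - 1) with hb
  have key : ∀ y : V, a (γ₀.symm y) = γ₀.symm (b y) := by
    intro y
    have h1 : γ₁ (γ₀.symm y) = γ₀.symm (γ₁ (γ₂ y)) := by
      conv_lhs => rw [← γ₀.symm_apply_apply (γ₁ (γ₀.symm y)), hrel y]
    have hbv : b y = γ₁ (γ₂ y) - c • y := by
      simp only [hb, ha, LinearMap.add_apply, Module.End.mul_apply, LinearMap.sub_apply,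
        LinearMap.smul_apply, Module.End.one_apply, smul_sub, LinearEquiv.coe_coe]
      abel
    rw [hbv, map_sub, map_smul, ← h1]
    simp [ha]
  have keypow : ∀ m : ℕ, ∀ y : V, (a ^ m) (γ₀.symm y) = γ₀.symm ((b ^ m) y) := by
    intro m
    induction m with
    | zero => intro y; simp
    | succ k ih =>
      intro y
      rw [pow_succ, pow_succ, Module.End.mul_apply, Module.End.mul_apply, key y, ih]
  refine ⟨n + r, ?_⟩
  rw [keypow]
  suffices h : (b ^ (n + r)) x = 0 by rw [h, map_zero]
  have hgN : Commute γ₂ (γ₂ - 1) := (Commute.refl γ₂).sub_right (Commute.one_right γ₂)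
  have hpq : Commute (a * γ₂) (c • (γ₂ - 1)) := (haN.mul_left hgN).smul_right c
  rw [hb, hpq.add_pow]
  rw [LinearMap.sum_apply]
  apply Finset.sum_eq_zero
  intro k hk
  by_cases hkn : n ≤ k
  · -- the a^k factor kills x
    have h1 : (a * γ₂) ^ k = a ^ k * γ₂ ^ k := hag.mul_pow k
    have hcomm2 : Commute (a ^ k) (γ₂ ^ k * (c • (γ₂ - 1)) ^ (n + r - k) * ((n + r).choose k : Module.End K V)) := by
      exact ((hag.pow_pow k k).mul_right ((haN.smul_right c).pow_pow k (n + r - k))).mul_right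
        ((Nat.cast_commute _ _).symm)
    have h2 : (a * γ₂) ^ k * (c • (γ₂ - 1)) ^ (n + r - k) * (((n + r).choose k : ℕ) : Module.End K V)
        = γ₂ ^ k * (c • (γ₂ - 1)) ^ (n + r - k) * (((n + r).choose k : ℕ) : Module.End K V) * a ^ k := by
      rw [h1]
      rw [mul_assoc, mul_assoc, ← mul_assoc (γ₂ ^ k), hcomm2.eq]
    rw [h2, Module.End.mul_apply]
    have h3 : (a ^ k) x = 0 := by
      have : a ^ k = a ^ (k - n) * a ^ n := by rw [← pow_add]; congr 1; omega
      rw [this, Module.End.mul_apply, hn, map_zero]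
    rw [h3, map_zero]
  · -- the nilpotent factor vanishes
    have h4 : (c • (γ₂ - 1)) ^ (n + r - k) = 0 := by
      rw [smul_pow]
      have : (γ₂ - 1) ^ (n + r - k) = (γ₂ - 1) ^ r * (γ₂ - 1) ^ (n + r - k - r) := by
        rw [← pow_add]; congr 1; omega
      rw [this, hr, zero_mul, smul_zero]
    rw [h4, mul_zero, zero_mul, LinearMap.zero_apply]
end

section
/- Let S be a sharp finitely generated commutative monoid written multiplicatively, and let R(S) denote the set of maps r : (S × S) ∖ {(1,1)} → [0, ∞] satisfying: (i) r(f,g) = r(g,f)^{-1}; (ii) r(f,g)·r(g,h) = r(f,h) whenever {r(f,g), r(g,h)} ≠ {0, ∞}; (iii) r(fg, h) = r(f,h) + r(g,h). Then for S = ℕ² with standard generators q₁, q₂, the map R(ℕ²) → [0, ∞] sending r to r(q₁, q₂) is a bijection. -/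
open ENNReal

/-- The space of ratios `R(S)` of Kato–Nakayama–Usui: maps
`(S × S) ∖ {(1,1)} → [0,∞]` satisfying `r(f,g) = r(g,f)⁻¹`,
`r(f,g)·r(g,h) = r(f,h)` whenever `{r(f,g), r(g,h)} ≠ {0,∞}`, and
`r(fg,h) = r(f,h) + r(g,h)`. -/
structure RatioSpace (S : Type*) [CommMonoid S] where
  toFun : {p : S × S // p ≠ 1} → ℝ≥0∞
  inv_symm : ∀ (f g : S) (h : ((f, g) : S × S) ≠ 1) (h' : ((g, f) : S × S) ≠ 1),
    toFun ⟨(f, g), h⟩ = (toFun ⟨(g, f), h'⟩)⁻¹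
  mul_trans : ∀ (f g h : S) (h1 : ((f, g) : S × S) ≠ 1) (h2 : ((g, h) : S × S) ≠ 1)
    (h3 : ((f, h) : S × S) ≠ 1),
    ({toFun ⟨(f, g), h1⟩, toFun ⟨(g, h), h2⟩} : Set ℝ≥0∞) ≠ {0, ⊤} →
    toFun ⟨(f, g), h1⟩ * toFun ⟨(g, h), h2⟩ = toFun ⟨(f, h), h3⟩
  add_law : ∀ (f g h : S) (h1 : ((f * g, h) : S × S) ≠ 1) (h2 : ((f, h) : S × S) ≠ 1)
    (h3 : ((g, h) : S × S) ≠ 1),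
    toFun ⟨(f * g, h), h1⟩ = toFun ⟨(f, h), h2⟩ + toFun ⟨(g, h), h3⟩

/-!
Write `t = r(q₁, q₂)`. Additivity in the first argument gives `r(q₁^a q₂^b, q₂) = a t + b` and
`r(q₁^a q₂^b, q₁) = a + b t⁻¹`, and by symmetry the reversed ratios. Any `r(f, g)` then factors as
`r(f, qᵢ) · r(qᵢ, g)` for a pivot `qᵢ` at which the exceptional product `0 · ∞` does not occur, and
such a pivot always exists; so `r` is determined by `t`. Conversely every `t` is attained by
comparing the vectors `(a t + b, a)` (or `(a, b)` when `t = ∞`) lexicographically.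
-/

open NNReal

lemma ENNReal.pair_eq_zero_top_iff {x y : ℝ≥0∞} :
    ({x, y} : Set ℝ≥0∞) = {0, ⊤} ↔ x = 0 ∧ y = ⊤ ∨ x = ⊤ ∧ y = 0 :=
  Set.pair_eq_pair_iff

lemma ENNReal.div_mul_div_cancel_of_pair_ne {a b c : ℝ≥0∞} (hb : b ≠ ⊤)
    (h : ({a / b, b / c} : Set ℝ≥0∞) ≠ {0, ⊤}) : a / b * (b / c) = a / c := by
  rcases eq_or_ne b 0 with rfl | hb₀
  · rcases eq_or_ne a 0 with rfl | ha
    · simp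
    · simp [ENNReal.div_zero ha, ENNReal.pair_eq_zero_top_iff] at h
  · rw [div_eq_mul_inv, div_eq_mul_inv, div_eq_mul_inv, mul_assoc, ← mul_assoc b⁻¹,
      ENNReal.inv_mul_cancel hb₀ hb, one_mul]

noncomputable def lexRatio (x y : ℝ≥0 × ℝ≥0) : ℝ≥0∞ :=
  if x.1 = 0 ∧ y.1 = 0 then (x.2 : ℝ≥0∞) / y.2 else (x.1 : ℝ≥0∞) / y.1

namespace lexRatio

variable {x y z : ℝ≥0 × ℝ≥0}

lemma of_fst_eq_zero (hx : x.1 = 0) (hy : y.1 = 0) :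
    lexRatio x y = (x.2 : ℝ≥0∞) / y.2 :=
  if_pos ⟨hx, hy⟩

lemma of_fst_ne_zero (h : x.1 ≠ 0 ∨ y.1 ≠ 0) : lexRatio x y = (x.1 : ℝ≥0∞) / y.1 :=
  if_neg (by tauto)

lemma inv_symm (h : x ≠ 0 ∨ y ≠ 0) : lexRatio x y = (lexRatio y x)⁻¹ := by
  by_cases h₁ : x.1 = 0 ∧ y.1 = 0
  · rw [of_fst_eq_zero h₁.1 h₁.2, of_fst_eq_zero h₁.2 h₁.1, ENNReal.inv_div (by simp)]
    simpa [Prod.ext_iff, h₁] using h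
  · have h₁' : x.1 ≠ 0 ∨ y.1 ≠ 0 := by tauto
    rw [of_fst_ne_zero h₁', of_fst_ne_zero h₁'.symm, ENNReal.inv_div (by simp)]
    simpa using h₁'

lemma add_left (x y z : ℝ≥0 × ℝ≥0) : lexRatio (x + y) z = lexRatio x z + lexRatio y z := by
  by_cases hz : z.1 = 0
  · by_cases hxy : x.1 = 0 ∧ y.1 = 0
    · rw [of_fst_eq_zero hxy.1 hz, of_fst_eq_zero hxy.2 hz,
        of_fst_eq_zero (by simp [hxy.1, hxy.2]) hz, ENNReal.div_add_div_same]
      simp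
    · have hxy' : (x + y).1 ≠ 0 := by simpa [Prod.fst_add] using hxy
      rw [of_fst_ne_zero (.inl hxy'), hz, ENNReal.coe_zero, ENNReal.div_zero (by simpa using hxy')]
      rcases not_and_or.1 hxy with hx | hy
      · rw [of_fst_ne_zero (.inl hx), hz, ENNReal.coe_zero, ENNReal.div_zero (by simpa using hx),
          top_add]
      · rw [of_fst_ne_zero (.inl hy), hz, ENNReal.coe_zero, ENNReal.div_zero (by simpa using hy),
          add_top]
  · rw [of_fst_ne_zero (.inr hz), of_fst_ne_zero (.inr hz), of_fst_ne_zero (.inr hz),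
      ENNReal.div_add_div_same, Prod.fst_add, ENNReal.coe_add]

lemma mul_trans (h : ({lexRatio x y, lexRatio y z} : Set ℝ≥0∞) ≠ {0, ⊤}) :
    lexRatio x y * lexRatio y z = lexRatio x z := by
  by_cases hxy : x.1 = 0 ∧ y.1 = 0 <;> by_cases hyz : y.1 = 0 ∧ z.1 = 0
  · rw [of_fst_eq_zero hxy.1 hxy.2, of_fst_eq_zero hyz.1 hyz.2] at h ⊢
    rw [of_fst_eq_zero hxy.1 hyz.2]
    exact ENNReal.div_mul_div_cancel_of_pair_ne ENNReal.coe_ne_top h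
  · have hz : z.1 ≠ 0 := fun hz => hyz ⟨hxy.2, hz⟩
    rw [of_fst_ne_zero (.inr hz), of_fst_ne_zero (.inr hz), hxy.1, hxy.2]
    simp
  · have hx : x.1 ≠ 0 := fun hx => hxy ⟨hx, hyz.1⟩
    have hx_top {w : ℝ≥0 × ℝ≥0} (hw : w.1 = 0) : lexRatio x w = ⊤ := by
      rw [of_fst_ne_zero (.inl hx), hw, ENNReal.coe_zero, ENNReal.div_zero (by simpa using hx)]
    rw [hx_top hyz.1] at h ⊢
    rw [hx_top hyz.2]
    refine ENNReal.top_mul fun h₀ => h ?_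
    rw [h₀, Set.pair_comm]
  · rw [of_fst_ne_zero (by tauto), of_fst_ne_zero (by tauto)] at h ⊢
    by_cases hxz : x.1 = 0 ∧ z.1 = 0
    · rw [hxz.1, hxz.2, ENNReal.coe_zero, ENNReal.zero_div,
        ENNReal.div_zero (by simpa using fun hy => hxy ⟨hxz.1, hy⟩)] at h
      exact absurd rfl h
    · rw [of_fst_ne_zero (by tauto)]
      exact ENNReal.div_mul_div_cancel_of_pair_ne ENNReal.coe_ne_top h

end lexRatio

namespace RatioSpace

variable {S : Type*} [CommMonoid S]

noncomputable def ofLex (L : S → ℝ≥0 × ℝ≥0) (map_mul : ∀ f g, L (f * g) = L f + L g)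
    (eq_one_of_eq_zero : ∀ f, L f = 0 → f = 1) : RatioSpace S where
  toFun p := lexRatio (L p.1.1) (L p.1.2)
  inv_symm f g h _ := lexRatio.inv_symm <| by
    by_contra! hfg
    exact h (Prod.ext (eq_one_of_eq_zero f hfg.1) (eq_one_of_eq_zero g hfg.2))
  mul_trans _ _ _ _ _ _ := lexRatio.mul_trans
  add_law f g h _ _ _ := by
    simp only [map_mul, lexRatio.add_left]

open Classical in
/-- `r(f, g)` as a total function, with the junk value `0` at the excluded pair `(1, 1)`. -/
noncomputable def ratio (r : RatioSpace S) (f g : S) : ℝ≥0∞ :=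
  if h : (f, g) = 1 then 0 else r.toFun ⟨(f, g), h⟩

variable (r : RatioSpace S) {f g h : S}

lemma ratio_of_ne (hfg : (f, g) ≠ 1) : r.ratio f g = r.toFun ⟨(f, g), hfg⟩ :=
  dif_neg hfg

lemma ratio_injective : Function.Injective (ratio (S := S)) := by
  intro r r' h
  obtain ⟨φ, _, _, _⟩ := r
  obtain ⟨φ', _, _, _⟩ := r'
  congr
  funext ⟨⟨f, g⟩, hfg⟩
  simpa only [ratio_of_ne _ hfg] using congrFun₂ h f g

lemma ratio_inv_symm (hfg : (f, g) ≠ 1) : r.ratio f g = (r.ratio g f)⁻¹ := by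
  have hgf : (g, f) ≠ 1 := fun h => hfg (by simp_all [Prod.ext_iff])
  rw [ratio_of_ne r hfg, ratio_of_ne r hgf, r.inv_symm]

lemma ratio_mul_ratio (hfg : (f, g) ≠ 1) (hgh : (g, h) ≠ 1) (hfh : (f, h) ≠ 1)
    (hne : ({r.ratio f g, r.ratio g h} : Set ℝ≥0∞) ≠ {0, ⊤}) :
    r.ratio f g * r.ratio g h = r.ratio f h := by
  rw [ratio_of_ne r hfg, ratio_of_ne r hgh] at hne ⊢
  rw [ratio_of_ne r hfh]
  exact r.mul_trans f g h hfg hgh hfh hne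

lemma ratio_mul_left (hh : h ≠ 1) : r.ratio (f * g) h = r.ratio f h + r.ratio g h := by
  have hne (x : S) : (x, h) ≠ 1 := by simp [hh]
  rw [ratio_of_ne r (hne _), ratio_of_ne r (hne f), ratio_of_ne r (hne g)]
  exact r.add_law f g h _ _ _

lemma ratio_self (hf : f ≠ 1) : r.ratio f f = 1 := by
  have hff : (f, f) ≠ 1 := by simp [hf]
  set x := r.ratio f f
  have hinv : x = x⁻¹ := r.ratio_inv_symm hff
  have hx₀ : x ≠ 0 := fun h => by simp [h] at hinv
  have hx_top : x ≠ ⊤ := fun h => by simp [h] at hinv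
  have hsq : x * x = x :=
    r.ratio_mul_ratio hff hff hff (mt ENNReal.pair_eq_zero_top_iff.1 (by tauto))
  calc x = x * x := hsq.symm
    _ = x * x⁻¹ := by rw [← hinv]
    _ = 1 := ENNReal.mul_inv_cancel hx₀ hx_top

lemma ratio_one_left (hg : g ≠ 1) : r.ratio 1 g = 0 := by
  have hdouble : r.ratio 1 g + r.ratio 1 g = r.ratio 1 g := by
    rw [← r.ratio_mul_left hg, one_mul]
  have hfinite : r.ratio 1 g ≠ ⊤ := by
    intro htop
    have := r.ratio_mul_left (f := 1) (g := g) hg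
    rw [one_mul, r.ratio_self hg, htop, top_add] at this
    exact ENNReal.one_ne_top this
  simpa using (ENNReal.add_right_inj hfinite).1 (hdouble.trans (add_zero _).symm)

lemma ratio_pow_left (hh : h ≠ 1) (n : ℕ) : r.ratio (f ^ n) h = n * r.ratio f h := by
  induction n with
  | zero => simp [r.ratio_one_left hh]
  | succ n ih => rw [pow_succ, r.ratio_mul_left hh, ih, Nat.cast_succ, add_one_mul]

end RatioSpace

lemma ENNReal.pair_inv_eq_zero_top_iff {u v : ℝ≥0∞} :
    ({u, v⁻¹} : Set ℝ≥0∞) = {0, ⊤} ↔ u = 0 ∧ v = 0 ∨ u = ⊤ ∧ v = ⊤ := by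
  rw [ENNReal.pair_eq_zero_top_iff, ENNReal.inv_eq_top, ENNReal.inv_eq_zero]

/-- For `t = r(q₁, q₂)`, `f = q₁ ^ a * q₂ ^ b` and `g = q₁ ^ c * q₂ ^ d` the two pairs are
`{r(f, qᵢ), r(qᵢ, g)}`: at least one of the pivots `q₁`, `q₂` avoids the exceptional `0 · ∞`. -/
lemma ENNReal.pair_ne_zero_top_of_pivot (t : ℝ≥0∞) {a b c d : ℕ} (h : (a, b) ≠ 0 ∨ (c, d) ≠ 0) :
    ({(a + b * t⁻¹ : ℝ≥0∞), (c + d * t⁻¹)⁻¹} : Set ℝ≥0∞) ≠ {0, ⊤} ∨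
      ({(a * t + b : ℝ≥0∞), (c * t + d)⁻¹} : Set ℝ≥0∞) ≠ {0, ⊤} := by
  simp only [ne_eq, ENNReal.pair_inv_eq_zero_top_iff, Prod.mk_eq_zero] at h ⊢
  rcases eq_or_ne t 0 with rfl | ht₀
  · simp [ENNReal.mul_eq_top]
    tauto
  rcases eq_or_ne t ⊤ with rfl | ht
  · simp [ENNReal.mul_eq_top]
    tauto
  · simp [ENNReal.mul_eq_top, ht₀, ht]
    tauto

section NatSq

open Multiplicative

local notation "q₁" => ofAdd ((1, 0) : ℕ × ℕ)
local notation "q₂" => ofAdd ((0, 1) : ℕ × ℕ)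

lemma Multiplicative.ofAdd_eq_pow_mul_pow (a b : ℕ) :
    ofAdd ((a, b) : ℕ × ℕ) = q₁ ^ a * q₂ ^ b := by
  simp [← ofAdd_nsmul, ← ofAdd_add]

namespace RatioSpace

variable {S : Type*} [CommMonoid S]

lemma ratio_eq_of_pivot {r r' : RatioSpace S} {f g q : S} (hq : q ≠ 1) (hfg : (f, g) ≠ 1)
    (hfq : r.ratio f q = r'.ratio f q) (hgq : r.ratio g q = r'.ratio g q)
    (hne : ({r.ratio f q, (r.ratio g q)⁻¹} : Set ℝ≥0∞) ≠ {0, ⊤}) :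
    r.ratio f g = r'.ratio f g := by
  have hq_right : (f, q) ≠ 1 := by simp [hq]
  have hq_left : (q, g) ≠ 1 := by simp [hq]
  have factor (r : RatioSpace S) (hne : ({r.ratio f q, (r.ratio g q)⁻¹} : Set ℝ≥0∞) ≠ {0, ⊤}) :
      r.ratio f g = r.ratio f q * (r.ratio g q)⁻¹ := by
    rw [← r.ratio_inv_symm hq_left] at hne ⊢
    exact (r.ratio_mul_ratio hq_right hq_left hfg hne).symm
  rw [factor r hne, factor r' (by rwa [← hfq, ← hgq]), hfq, hgq]

variable (r : RatioSpace (Multiplicative (ℕ × ℕ)))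

lemma ratio_ofAdd_left {h : Multiplicative (ℕ × ℕ)} (hh : h ≠ 1) (a b : ℕ) :
    r.ratio (ofAdd (a, b)) h = a * r.ratio q₁ h + b * r.ratio q₂ h := by
  rw [ofAdd_eq_pow_mul_pow, r.ratio_mul_left hh, r.ratio_pow_left hh, r.ratio_pow_left hh]

lemma ratio_ofAdd_q₂ (a b : ℕ) : r.ratio (ofAdd (a, b)) q₂ = a * r.ratio q₁ q₂ + b := by
  rw [r.ratio_ofAdd_left (by decide), r.ratio_self (by decide), mul_one]

lemma ratio_ofAdd_q₁ (a b : ℕ) : r.ratio (ofAdd (a, b)) q₁ = a + b * (r.ratio q₁ q₂)⁻¹ := by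
  rw [r.ratio_ofAdd_left (by decide), r.ratio_self (by decide), mul_one,
    r.ratio_inv_symm (by decide)]

lemma ratio_eq_of_ratio_q₁_q₂_eq {r r' : RatioSpace (Multiplicative (ℕ × ℕ))}
    (ht : r.ratio q₁ q₂ = r'.ratio q₁ q₂) : r.ratio = r'.ratio := by
  funext f g
  by_cases hfg : (f, g) = 1
  · simp [ratio, hfg]
  obtain ⟨⟨a, b⟩, rfl⟩ := ofAdd.surjective f
  obtain ⟨⟨c, d⟩, rfl⟩ := ofAdd.surjective g
  have hne : (a, b) ≠ 0 ∨ (c, d) ≠ 0 := by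
    by_contra! h
    exact hfg (by simp [h.1, h.2])
  rcases ENNReal.pair_ne_zero_top_of_pivot (r.ratio q₁ q₂) hne with hne | hne
  · refine ratio_eq_of_pivot (q := q₁) (by decide) hfg ?_ ?_ ?_
    · rw [ratio_ofAdd_q₁ r a b, ratio_ofAdd_q₁ r' a b, ht]
    · rw [ratio_ofAdd_q₁ r c d, ratio_ofAdd_q₁ r' c d, ht]
    · rwa [ratio_ofAdd_q₁ r a b, ratio_ofAdd_q₁ r c d]
  · refine ratio_eq_of_pivot (q := q₂) (by decide) hfg ?_ ?_ ?_
    · rw [ratio_ofAdd_q₂ r a b, ratio_ofAdd_q₂ r' a b, ht]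
    · rw [ratio_ofAdd_q₂ r c d, ratio_ofAdd_q₂ r' c d, ht]
    · rwa [ratio_ofAdd_q₂ r a b, ratio_ofAdd_q₂ r c d]

/-- Lexicographic coordinates of the monomial `q₁ ^ a * q₂ ^ b` realising `r(q₁, q₂) = t`. -/
noncomputable def lexCoords (t : ℝ≥0∞) (v : ℕ × ℕ) : ℝ≥0 × ℝ≥0 :=
  if t = ⊤ then (v.1, v.2) else (v.1 * t.toNNReal + v.2, v.1)

lemma lexCoords_add (t : ℝ≥0∞) (v w : ℕ × ℕ) :
    lexCoords t (v + w) = lexCoords t v + lexCoords t w := by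
  unfold lexCoords
  split_ifs <;> ext <;> simp [add_mul, add_add_add_comm]

lemma eq_zero_of_lexCoords_eq_zero (t : ℝ≥0∞) {v : ℕ × ℕ} (hv : lexCoords t v = 0) : v = 0 := by
  unfold lexCoords at hv
  split_ifs at hv <;> simp_all [Prod.ext_iff]

noncomputable def ofValue (t : ℝ≥0∞) : RatioSpace (Multiplicative (ℕ × ℕ)) :=
  ofLex (lexCoords t ∘ toAdd) (fun f g => lexCoords_add t f.toAdd g.toAdd)
    (fun _ hf => toAdd_eq_zero.1 (eq_zero_of_lexCoords_eq_zero t hf))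

lemma ofValue_ratio_q₁_q₂ (t : ℝ≥0∞) : (ofValue t).ratio q₁ q₂ = t := by
  rw [ratio_of_ne _ (by decide)]
  change lexRatio (lexCoords t (1, 0)) (lexCoords t (0, 1)) = t
  by_cases ht : t = ⊤
  · simp [lexCoords, lexRatio, ht]
  · simp [lexCoords, lexRatio, ht, ENNReal.coe_toNNReal ht]

end RatioSpace

end NatSq

/-- For `S = ℕ²` (written multiplicatively, with standard generators `q₁, q₂`),
the map `R(ℕ²) → [0,∞]`, `r ↦ r(q₁, q₂)`, is a bijection. -/
theorem ratioSpace_N2_bijective :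
    Function.Bijective (fun r : RatioSpace (Multiplicative (ℕ × ℕ)) =>
      r.toFun ⟨(Multiplicative.ofAdd ((1, 0) : ℕ × ℕ),
                Multiplicative.ofAdd ((0, 1) : ℕ × ℕ)), by decide⟩) := by
  simp only [← RatioSpace.ratio_of_ne]
  refine ⟨fun r r' h => RatioSpace.ratio_injective (RatioSpace.ratio_eq_of_ratio_q₁_q₂_eq h),
    fun t => ⟨RatioSpace.ofValue t, RatioSpace.ofValue_ratio_q₁_q₂ t⟩⟩
end

section
/- Let S be a sharp finitely generated monoid and σ = Hom(S, ℝ_{≥0}^add) its dual cone. For each N in the interior σ° of σ (i.e. N(f) > 0 for all f ∈ S ∖ {1}), define ψ(N) : (S × S) ∖ {(1,1)} → [0, ∞] by ψ(N)(f,g) = N(f)/N(g) (with conventions a/0 = ∞ for a > 0 and 0/a = 0 for a > 0). Then ψ(N) belongs to R(S), i.e. it satisfies r(f,g) = r(g,f)^{-1}, r(f,g)r(g,h) = r(f,h) when {r(f,g),r(g,h)} ≠ {0,∞}, and r(fg,h) = r(f,h) + r(g,h). Moreover ψ(N) = ψ(N') for N, N' ∈ σ° if and only if N' = cN for some c ∈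 ℝ_{>0}. -/
open ENNReal

/-- For `N` in the interior of the dual cone `σ = Hom(S, ℝ_{≥0}^add)` of a sharp
finitely generated monoid `S` (i.e. `N` is additive with `N f > 0` for all `f ≠ 1`),
the map `ψ(N)(f,g) = N(f)/N(g)` (computed in `[0,∞]`) satisfies the axioms of the
space of ratios; moreover `ψ(N) = ψ(N')` iff `N' = cN` for some `c > 0`. -/
theorem psi_mem_ratioSpace_and_psi_eq_iff
    {S : Type*} [CommMonoid S]
    (hsharp : ∀ f g : S, f * g = 1 → f = 1)
    (hfg : ∃ s : Finset S, Submonoid.closure (s : Set S) = ⊤)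
    (N N' : S → ℝ)
    (hN1 : N 1 = 0) (hNadd : ∀ f g : S, N (f * g) = N f + N g)
    (hNpos : ∀ f : S, f ≠ 1 → 0 < N f)
    (hN'1 : N' 1 = 0) (hN'add : ∀ f g : S, N' (f * g) = N' f + N' g)
    (hN'pos : ∀ f : S, f ≠ 1 → 0 < N' f) :
    (∀ f g : S, ((f, g) : S × S) ≠ 1 →
      ENNReal.ofReal (N f) / ENNReal.ofReal (N g)
        = (ENNReal.ofReal (N g) / ENNReal.ofReal (N f))⁻¹) ∧
    (∀ f g h : S, ((f, g) : S × S) ≠ 1 → ((g, h) : S × S) ≠ 1 → ((f, h) : S × S) ≠ 1 →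
      ({ENNReal.ofReal (N f) / ENNReal.ofReal (N g),
        ENNReal.ofReal (N g) / ENNReal.ofReal (N h)} : Set ℝ≥0∞) ≠ {0, ⊤} →
      (ENNReal.ofReal (N f) / ENNReal.ofReal (N g)) *
        (ENNReal.ofReal (N g) / ENNReal.ofReal (N h))
        = ENNReal.ofReal (N f) / ENNReal.ofReal (N h)) ∧
    (∀ f g h : S, ((f * g, h) : S × S) ≠ 1 → ((f, h) : S × S) ≠ 1 →
        ((g, h) : S × S) ≠ 1 →
      ENNReal.ofReal (N (f * g)) / ENNReal.ofReal (N h)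
        = ENNReal.ofReal (N f) / ENNReal.ofReal (N h)
          + ENNReal.ofReal (N g) / ENNReal.ofReal (N h)) ∧
    ((∀ f g : S, ((f, g) : S × S) ≠ 1 →
        ENNReal.ofReal (N f) / ENNReal.ofReal (N g)
          = ENNReal.ofReal (N' f) / ENNReal.ofReal (N' g)) ↔
      ∃ c : ℝ, 0 < c ∧ ∀ f : S, N' f = c * N f) := by
  have hzero : ∀ f : S, f = 1 → ENNReal.ofReal (N f) = 0 := by
    intro f hf; simp [hf, hN1]
  have hpos : ∀ f : S, f ≠ 1 → ENNReal.ofReal (N f) ≠ 0 := by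
    intro f hf
    exact (ENNReal.ofReal_pos.mpr (hNpos f hf)).ne'
  refine ⟨?_, ?_, ?_, ?_⟩
  · intro f g hfg1
    rw [ENNReal.inv_div (Or.inl ENNReal.ofReal_ne_top)]
    rcases (not_and_or.mp (by simpa [Prod.ext_iff] using hfg1)) with h | h
    · exact Or.inl (hpos f h)
    · exact Or.inr (hpos g h)
  · intro f g h h1 h2 h3 hne
    by_cases hg : g = 1
    · exfalso
      apply hne
      have hf : f ≠ 1 := fun hf => h1 (by simp [Prod.ext_iff, hf, hg])
      have hh : h ≠ 1 := fun hh => h2 (by simp [Prod.ext_iff, hg, hh])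
      rw [hzero g hg]
      rw [ENNReal.div_zero (hpos f hf), ENNReal.zero_div]
      ext x; simp [or_comm]
    · rw [← mul_div_assoc,
        ENNReal.div_mul_cancel (hpos g hg) ENNReal.ofReal_ne_top]
  · intro f g h _ _ _
    have hf0 : 0 ≤ N f := by
      by_cases hf : f = 1
      · simp [hf, hN1]
      · exact (hNpos f hf).le
    have hg0 : 0 ≤ N g := by
      by_cases hg : g = 1
      · simp [hg, hN1]
      · exact (hNpos g hg).le
    rw [hNadd, ENNReal.ofReal_add hf0 hg0, ENNReal.add_div]
  · constructor
    · intro heq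
      by_cases htriv : ∀ f : S, f = 1
      · exact ⟨1, one_pos, fun f => by rw [htriv f]; simp [hN1, hN'1]⟩
      · push_neg at htriv
        obtain ⟨f0, hf0⟩ := htriv
        refine ⟨N' f0 / N f0, div_pos (hN'pos f0 hf0) (hNpos f0 hf0), fun f => ?_⟩
        by_cases hf : f = 1
        · simp [hf, hN1, hN'1]
        · have key := heq f f0 (by simp [Prod.ext_iff, hf])
          have := congrArg ENNReal.toReal key
          rw [ENNReal.toReal_div, ENNReal.toReal_div,
            ENNReal.toReal_ofReal (hNpos f hf).le,
            ENNReal.toReal_ofReal (hNpos f0 hf0).le,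
            ENNReal.toReal_ofReal (hN'pos f hf).le,
            ENNReal.toReal_ofReal (hN'pos f0 hf0).le] at this
          have a1 := (hNpos f0 hf0).ne'
          have a2 := (hN'pos f0 hf0).ne'
          field_simp [a1, a2] at this ⊢
          linear_combination -this
    · rintro ⟨c, hc, hc'⟩ f g _
      rw [hc' f, hc' g, ENNReal.ofReal_mul hc.le, ENNReal.ofReal_mul hc.le,
        ENNReal.mul_div_mul_left _ _ (ENNReal.ofReal_pos.mpr hc).ne'
          ENNReal.ofReal_ne_top]
end

section
/- Let S be a sharp finitely generated monoid generated by non-units f₁, …, f_m, and let r ∈ R(S) (the space of ratios). Then r lies in R(S)₁, i.e. r = ψ(N) for some N in the interior of the dual cone σ = Hom(S, ℝ_{≥0}^add), if and only if r(f_i, f_j) ∈ (0, ∞) for all i, j. In particular, 'r(f_i,f_j) finite and positive for all generator pairs' characterizes R(S)₁ among elements of R(S). -/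
open ENNReal

/-- `r(b,b) = 1` for `b ≠ 1`. -/
theorem RatioSpace.self_eq_one {S : Type*} [CommMonoid S] (r : RatioSpace S) (b : S)
    (h : ((b, b) : S × S) ≠ 1) : r.toFun ⟨(b, b), h⟩ = 1 := by
  set x := r.toFun ⟨(b, b), h⟩ with hx
  have hside : ({x, x} : Set ℝ≥0∞) ≠ {0, ⊤} := by
    intro e
    have h0 : (0 : ℝ≥0∞) ∈ ({x, x} : Set ℝ≥0∞) := e ▸ Set.mem_insert _ _
    have ht : (⊤ : ℝ≥0∞) ∈ ({x, x} : Set ℝ≥0∞) := e ▸ Set.mem_insert_of_mem _ rfl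
    simp only [Set.mem_insert_iff, Set.mem_singleton_iff, or_self] at h0 ht
    exact ENNReal.top_ne_zero (ht.trans h0.symm)
  have hmul : x * x = x := r.mul_trans b b b h h h hside
  have hinv : x = x⁻¹ := r.inv_symm b b h h
  have hx0 : x ≠ 0 := by
    intro e; rw [e] at hinv; simp at hinv
  have hxt : x ≠ ⊤ := by
    intro e; rw [e] at hinv; simp at hinv
  have : x * x * x⁻¹ = x * x⁻¹ := by rw [hmul]
  rwa [mul_assoc, ENNReal.mul_inv_cancel hx0 hxt, mul_one] at this

/-- `r(1,b) = 0` for `b ≠ 1`. -/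
theorem RatioSpace.one_left_eq_zero {S : Type*} [CommMonoid S] (r : RatioSpace S) (b : S)
    (hb : b ≠ 1) (h : ((1, b) : S × S) ≠ 1) : r.toFun ⟨(1, b), h⟩ = 0 := by
  have hbb : ((b, b) : S × S) ≠ 1 := fun e => hb (congrArg Prod.fst e)
  have h1b : (((1 : S) * b, b) : S × S) ≠ 1 := by
    rw [one_mul]; exact hbb
  have hadd := r.add_law 1 b b h1b h hbb
  have hcongr : r.toFun ⟨((1 : S) * b, b), h1b⟩ = r.toFun ⟨(b, b), hbb⟩ :=
    congrArg r.toFun (Subtype.ext (by show Prod.mk _ _ = Prod.mk _ _; rw [one_mul]))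
  rw [hcongr, r.self_eq_one b hbb] at hadd
  have h01 : (0 : ℝ≥0∞) + 1 = r.toFun ⟨(1, b), h⟩ + 1 := by rw [zero_add]; exact hadd
  exact ((ENNReal.add_left_inj ENNReal.one_ne_top).mp h01).symm

/-- For a sharp monoid `S` generated by non-units `f₁,…,f_m`, an element `r ∈ R(S)`
lies in `R(S)₁` (i.e. `r = ψ(N)` for some `N` in the interior of the dual cone)
iff `r(fᵢ, fⱼ) ∈ (0, ∞)` for all `i, j`. -/
theorem mem_ratioSpace_one_iff
    {S : Type*} [CommMonoid S]
    (hsharp : ∀ a b : S, a * b = 1 → a = 1)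
    (m : ℕ) (f : Fin m → S)
    (hfne : ∀ i, f i ≠ 1)
    (hgen : Submonoid.closure (Set.range f) = ⊤)
    (r : RatioSpace S) :
    (∃ N : S → ℝ, N 1 = 0 ∧ (∀ a b : S, N (a * b) = N a + N b) ∧
        (∀ a : S, a ≠ 1 → 0 < N a) ∧
        (∀ p : {p : S × S // p ≠ 1},
          r.toFun p = ENNReal.ofReal (N p.1.1) / ENNReal.ofReal (N p.1.2))) ↔
    (∀ i j : Fin m,
      r.toFun ⟨(f i, f j), fun h => hfne i (congrArg Prod.fst h)⟩ ≠ 0 ∧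
      r.toFun ⟨(f i, f j), fun h => hfne i (congrArg Prod.fst h)⟩ ≠ ⊤) := by
  constructor
  · rintro ⟨N, hN1, hNadd, hNpos, hNr⟩ i j
    rw [hNr]
    have hi := hNpos (f i) (hfne i)
    have hj := hNpos (f j) (hfne j)
    have hi0 : ENNReal.ofReal (N (f i)) ≠ 0 := by
      simp [ENNReal.ofReal_eq_zero, not_le, hi]
    have hj0 : ENNReal.ofReal (N (f j)) ≠ 0 := by
      simp [ENNReal.ofReal_eq_zero, not_le, hj]
    constructor
    · simp [ENNReal.div_eq_zero_iff, hi0, ENNReal.ofReal_ne_top]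
    · simp [ENNReal.div_eq_top, hi0, hj0, ENNReal.ofReal_ne_top]
  · intro hr
    rcases Nat.eq_zero_or_pos m with hm | hm
    · -- trivial monoid case
      have htriv : ∀ a : S, a = 1 := by
        intro a
        have ha : a ∈ Submonoid.closure (Set.range f) := hgen ▸ Submonoid.mem_top a
        have hre : Set.range f = ∅ := by
          subst hm; exact Set.range_eq_empty f
        rw [hre, Submonoid.closure_empty, Submonoid.mem_bot] at ha
        exact ha
      refine ⟨fun _ => 0, rfl, by simp, fun a ha => absurd (htriv a) ha, fun p => ?_⟩
      exact absurd (Prod.ext (htriv p.1.1) (htriv p.1.2)) p.2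
    · set g0 := f ⟨0, hm⟩ with hg0def
      have hg0 : g0 ≠ 1 := hfne _
      have hne : ∀ a : S, a ≠ 1 → ((a, g0) : S × S) ≠ 1 :=
        fun a ha h => ha (congrArg Prod.fst h)
      have hne' : ∀ a : S, a ≠ 1 → ((g0, a) : S × S) ≠ 1 :=
        fun a _ h => hg0 (congrArg Prod.fst h)
      -- key finiteness/positivity for r(a, g0)
      have key : ∀ a : S, a = 1 ∨ (a ≠ 1 ∧
          ∀ h : ((a, g0) : S × S) ≠ 1, r.toFun ⟨(a, g0), h⟩ ≠ 0 ∧ r.toFun ⟨(a, g0), h⟩ ≠ ⊤) := by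
        intro a
        have ha : a ∈ Submonoid.closure (Set.range f) := hgen ▸ Submonoid.mem_top a
        induction ha using Submonoid.closure_induction with
        | mem x hx =>
          obtain ⟨i, rfl⟩ := hx
          exact Or.inr ⟨hfne i, fun h => hr i ⟨0, hm⟩⟩
        | one => exact Or.inl rfl
        | mul x y hx hy ihx ihy =>
          rcases ihx with rfl | ⟨hx1, hxr⟩
          · rcases ihy with rfl | ⟨hy1, hyr⟩
            · exact Or.inl (one_mul 1)
            · refine Or.inr ⟨by rwa [one_mul], fun h => ?_⟩
              have hc : r.toFun ⟨((1 : S) * y, g0), h⟩ = r.toFun ⟨(y, g0), hne y hy1⟩ :=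
                congrArg r.toFun (Subtype.ext (by show Prod.mk _ _ = Prod.mk _ _; rw [one_mul]))
              rw [hc]; exact hyr _
          · rcases ihy with rfl | ⟨hy1, hyr⟩
            · refine Or.inr ⟨by rwa [mul_one], fun h => ?_⟩
              have hc : r.toFun ⟨(x * 1, g0), h⟩ = r.toFun ⟨(x, g0), hne x hx1⟩ :=
                congrArg r.toFun (Subtype.ext (by show Prod.mk _ _ = Prod.mk _ _; rw [mul_one]))
              rw [hc]; exact hxr _
            · have hxy : x * y ≠ 1 := fun e => hx1 (hsharp x y e)
              refine Or.inr ⟨hxy, fun h => ?_⟩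
              have hadd := r.add_law x y g0 h (hne x hx1) (hne y hy1)
              rw [hadd]
              obtain ⟨hx0, hxt⟩ := hxr (hne x hx1)
              obtain ⟨hy0, hyt⟩ := hyr (hne y hy1)
              constructor
              · simp [hx0, hy0]
              · exact ENNReal.add_ne_top.mpr ⟨hxt, hyt⟩
      classical
      refine ⟨fun a => if ha : a = 1 then 0 else (r.toFun ⟨(a, g0), hne a ha⟩).toReal,
        by simp, ?_, ?_, ?_⟩
      · -- additivity
        intro a b
        by_cases ha : a = 1
        · subst ha; simp
        by_cases hb : b = 1
        · subst hb; simp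
        have hab : a * b ≠ 1 := fun e => ha (hsharp a b e)
        simp only [dif_neg ha, dif_neg hb, dif_neg hab]
        rw [r.add_law a b g0 (hne _ hab) (hne a ha) (hne b hb)]
        obtain ⟨_, hat⟩ := ((key a).resolve_left ha).2 (hne a ha)
        obtain ⟨_, hbt⟩ := ((key b).resolve_left hb).2 (hne b hb)
        exact ENNReal.toReal_add hat hbt
      · -- positivity
        intro a ha
        simp only [dif_neg ha]
        obtain ⟨ha0, hat⟩ := ((key a).resolve_left ha).2 (hne a ha)
        exact ENNReal.toReal_pos ha0 hat
      · -- the ratio formula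
        rintro ⟨⟨a, b⟩, hp⟩
        by_cases ha : a = 1
        · subst ha
          have hb : b ≠ 1 := fun e => hp (by rw [e]; rfl)
          rw [r.one_left_eq_zero b hb hp]
          simp [hb]
        · by_cases hb : b = 1
          · subst hb
            have h1a : ((1, a) : S × S) ≠ 1 := fun e => ha (congrArg Prod.snd e)
            rw [r.inv_symm a 1 hp h1a, r.one_left_eq_zero a ha h1a]
            obtain ⟨ha0, hat⟩ := ((key a).resolve_left ha).2 (hne a ha)
            simp only [dif_neg ha]
            rw [ENNReal.inv_zero, dif_pos trivial, ENNReal.ofReal_zero,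
              ENNReal.div_zero (by simp [ENNReal.ofReal_eq_zero, not_le,
                ENNReal.toReal_pos ha0 hat])]
          · obtain ⟨ha0, hat⟩ := ((key a).resolve_left ha).2 (hne a ha)
            obtain ⟨hb0, hbt⟩ := ((key b).resolve_left hb).2 (hne b hb)
            have hinv := r.inv_symm g0 b (hne' b hb) (hne b hb)
            have hside : ({r.toFun ⟨(a, g0), hne a ha⟩, r.toFun ⟨(g0, b), hne' b hb⟩} :
                Set ℝ≥0∞) ≠ {0, ⊤} := by
              intro e
              have h0 : (0 : ℝ≥0∞) ∈ ({r.toFun ⟨(a, g0), hne a ha⟩,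
                  r.toFun ⟨(g0, b), hne' b hb⟩} : Set ℝ≥0∞) := e ▸ Set.mem_insert _ _
              simp only [Set.mem_insert_iff, Set.mem_singleton_iff] at h0
              rcases h0 with h0 | h0
              · exact ha0 h0.symm
              · rw [hinv] at h0
                exact hbt (by simpa using h0.symm)
            have hmul := r.mul_trans a g0 b (hne a ha) (hne' b hb) hp
            rw [← hmul hside, hinv]
            simp only [dif_neg ha, dif_neg hb]
            rw [ENNReal.ofReal_toReal hat, ENNReal.ofReal_toReal hbt,
              div_eq_mul_inv]
end

section
/- Let H be a finite-dimensional vector space over a field with two commuting nilpotent endomorphisms N₁, N₂. Suppose the natural map Ker(N₁) ∩ Ker(N₂) → H/(N₁H + N₂H) induced by the identity of H (inclusion followed by projection) is an isomorphism. Then N₁ = 0 and N₂ = 0. -/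
/-- Auxiliary: if `N, M` commute, `M` is nilpotent, and the only
vector in `ker N ⊓ ker M` lying in `range N ⊔ range M` is zero, then `N = 0`. -/
private lemma aux_zero
    {K H : Type*} [Field K] [AddCommGroup H] [Module K H]
    (N M : Module.End K H)
    (hcomm : N * M = M * N)
    (hN : IsNilpotent N) (hM : IsNilpotent M)
    (key : ∀ v : H, N v = 0 → M v = 0 →
      v ∈ LinearMap.range N ⊔ LinearMap.range M → v = 0) :
    N = 0 := by
  by_contra hne
  obtain ⟨n, hn⟩ := hN
  have hex : ∃ k, N ^ k = 0 := ⟨n, hn⟩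
  classical
  let k := Nat.find hex
  have hk0 : N ^ k = 0 := Nat.find_spec hex
  have hk2 : 2 ≤ k := by
    by_contra h
    push_neg at h
    interval_cases k
    · have h1 : (1 : Module.End K H) = 0 := by simpa using hk0
      have hz : ∀ x : H, x = 0 := fun x => by
        have := congrFun (congrArg DFunLike.coe h1) x
        simpa using this
      exact hne (by ext x; simpa using hz (N x))
    · exact hne (by simpa using hk0)
  have hkm1 : N ^ (k - 1) ≠ 0 := Nat.find_min hex (by omega)
  obtain ⟨x, hx⟩ : ∃ x, (N ^ (k - 1)) x ≠ 0 := by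
    by_contra h
    push_neg at h
    exact hkm1 (LinearMap.ext fun x => by simpa using h x)
  set v : H := (N ^ (k - 1)) x with hv
  have hvN : N v = 0 := by
    have h1 : N v = (N ^ k) x := by
      rw [hv, ← Module.End.mul_apply, ← pow_succ', show k - 1 + 1 = k by omega]
    rw [h1, hk0]; rfl
  have hvr : v ∈ LinearMap.range N := by
    refine ⟨(N ^ (k - 2)) x, ?_⟩
    rw [hv, ← Module.End.mul_apply, ← pow_succ', show k - 2 + 1 = k - 1 by omega]
  have hcomm' : ∀ w, N (M w) = M (N w) := fun w =>
    congrFun (congrArg DFunLike.coe hcomm) w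
  obtain ⟨m, hm⟩ := hM
  have main : ∀ (j : ℕ) (w : H), w ≠ 0 → N w = 0 → w ∈ LinearMap.range N →
      (M ^ j) w = 0 → False := by
    intro j
    induction j with
    | zero => intro w hw _ _ h0; exact hw (by simpa using h0)
    | succ j ih =>
      intro w hw hwN hwr h0
      by_cases hMw : M w = 0
      · exact hw (key w hwN hMw (Submodule.mem_sup_left hwr))
      · refine ih (M w) hMw ?_ ?_ ?_
        · rw [hcomm', hwN, map_zero]
        · obtain ⟨u, hu⟩ := hwr
          exact ⟨M u, by rw [hcomm', hu]⟩
        · have h2 : (M ^ (j + 1)) w = (M ^ j) (M w) := by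
            rw [pow_succ, Module.End.mul_apply]
          rw [← h2, h0]
  exact main m v hx hvN hvr (by rw [hm]; rfl)

/-- If `N₁, N₂` are commuting nilpotent endomorphisms of a finite-dimensional space
and the Lefschetz class map `Ker N₁ ∩ Ker N₂ → H/(N₁H + N₂H)` (inclusion followed by
the quotient projection) is an isomorphism, then `N₁ = 0` and `N₂ = 0`. -/
theorem lefschetz_class_map_iso_implies_zero
    {K H : Type*} [Field K] [AddCommGroup H] [Module K H] [FiniteDimensional K H]
    (N₁ N₂ : Module.End K H)
    (hcomm : N₁ * N₂ = N₂ * N₁)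
    (h₁ : IsNilpotent N₁) (h₂ : IsNilpotent N₂)
    (hbij : Function.Bijective
      ((Submodule.mkQ (LinearMap.range N₁ ⊔ LinearMap.range N₂)).comp
        (Submodule.subtype (LinearMap.ker N₁ ⊓ LinearMap.ker N₂)))) :
    N₁ = 0 ∧ N₂ = 0 := by
  have key : ∀ v : H, N₁ v = 0 → N₂ v = 0 →
      v ∈ LinearMap.range N₁ ⊔ LinearMap.range N₂ → v = 0 := by
    intro v hv1 hv2 hvs
    have hmem : v ∈ LinearMap.ker N₁ ⊓ LinearMap.ker N₂ :=
      ⟨LinearMap.mem_ker.mpr hv1, LinearMap.mem_ker.mpr hv2⟩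
    have h0 : ((Submodule.mkQ (LinearMap.range N₁ ⊔ LinearMap.range N₂)).comp
        (Submodule.subtype (LinearMap.ker N₁ ⊓ LinearMap.ker N₂)))
          (⟨v, hmem⟩ : ↥(LinearMap.ker N₁ ⊓ LinearMap.ker N₂)) = 0 := by
      simp [Submodule.Quotient.mk_eq_zero, hvs]
    have := hbij.injective (a₁ := ⟨v, hmem⟩) (a₂ := 0) (by simpa using h0)
    simpa using congrArg Subtype.val this
  constructor
  · exact aux_zero N₁ N₂ hcomm h₁ h₂ key
  · refine aux_zero N₂ N₁ hcomm.symm h₂ h₁ ?_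
    intro v hv2 hv1 hvs
    exact key v hv1 hv2 (by rwa [sup_comm])
end
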